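/- Independence of the limit from the refinement sequence: under the birth-and-growth assumptions, if (Π_j) and (Π′_l) are two refinement sequences of partitions of [t₀,t] with meshes tending to 0, then d_H(s_{Π_j}, s_{Π′_l}) → 0 and d_H(S_{Π_j}, S_{Π′_l}) → 0 as j, l → ∞, almost surely. In particular, the closure of the union of the s_{Π_j} equals the intersection of the S_{Π_j} and this common limit is independent of the chosen refinement sequence. -/

import Mathlib

/-!
Fix a path `ω` and a bound `C` for `G`. Any lower sum lies in any upper sum, whatever the two
partitions: a nucleus `d ∈ B s` first appears at some node `t'_p` of `Π'`, so
`d ∉ interior (B t'_{p-1})` and `t'_{p-1} < s`, and what grows from `d` after time `s` is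
contained in the `p`-th term of `S_Π'`. Conversely every point of `S_Π` lies within
`C · mesh Π` of `s_Π`, since the Aumann integrals over `(t (i - 1), tEnd]` and `(t i, tEnd]`
differ by at most `C (t i - t (i - 1))`. The sandwich `s_Π, s_Π' ⊆ S_Π, S_Π'` then bounds both
Hausdorff distances by `C · max (mesh Π) (mesh Π')` and identifies all the limits.
-/

open MeasureTheory Pointwise

/-- The Aumann integral of a set-valued map `X` over a set `s ⊆ ℝ` (w.r.t. Lebesgue measure). -/
noncomputable def aumannIntegral {E : Type*} [NormedAddCommGroup E] [NormedSpace ℝ E]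
    (X : ℝ → Set E) (s : Set ℝ) : Set E :=
  {y | ∃ f : ℝ → E, IntegrableOn f s volume ∧
        (∀ᵐ τ ∂(volume.restrict s), f τ ∈ X τ) ∧ y = ∫ τ in s, f τ}

/-- The predictable σ-algebra on `Ω × ℝ` associated to a filtration, over time horizon `[t₀,T]`. -/
def predictableSigma {Ω : Type*} (𝓕 : ℝ → MeasurableSpace Ω) (t₀ T : ℝ) :
    MeasurableSpace (Ω × ℝ) :=
  MeasurableSpace.generateFrom
    {S | (∃ A : Set Ω, MeasurableSet[𝓕 t₀] A ∧ S = A ×ˢ ({t₀} : Set ℝ)) ∨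
      (∃ A : Set Ω, ∃ s u : ℝ, t₀ ≤ s ∧ s < u ∧ u ≤ T ∧ MeasurableSet[𝓕 s] A ∧
        S = A ×ˢ Set.Ioc s u)}

/-- `t : ℕ → ℝ` (up to index `n`) is a partition of `[t₀, tEnd]`. -/
def IsPartition (t₀ tEnd : ℝ) (n : ℕ) (t : ℕ → ℝ) : Prop :=
  t 0 = t₀ ∧ t n = tEnd ∧ ∀ i < n, t i < t (i + 1)

/-- The lower sum `s_Π(tEnd)` of the birth-and-growth process, for trajectories `B`, `G`. -/
noncomputable def lowerSum {E : Type*} [NormedAddCommGroup E] [NormedSpace ℝ E]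
    (B G : ℝ → Set E) (tEnd : ℝ) (n : ℕ) (t : ℕ → ℝ) : Set E :=
  closure (B (t 0) + aumannIntegral G (Set.Ioc (t 0) tEnd)) ∪
    ⋃ i ∈ Finset.Icc 1 n,
      closure ((B (t i) \ interior (B (t (i - 1)))) + aumannIntegral G (Set.Ioc (t i) tEnd))

/-- The upper sum `S_Π(tEnd)` of the birth-and-growth process, for trajectories `B`, `G`. -/
noncomputable def upperSum {E : Type*} [NormedAddCommGroup E] [NormedSpace ℝ E]
    (B G : ℝ → Set E) (tEnd : ℝ) (n : ℕ) (t : ℕ → ℝ) : Set E :=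
  closure (B (t 0) + aumannIntegral G (Set.Ioc (t 0) tEnd)) ∪
    ⋃ i ∈ Finset.Icc 1 n,
      closure ((B (t i) \ interior (B (t (i - 1)))) + aumannIntegral G (Set.Ioc (t (i - 1)) tEnd))

/-- The mesh of a partition. -/
noncomputable def partitionMesh (n : ℕ) (t : ℕ → ℝ) (hn : 1 ≤ n) : ℝ :=
  (Finset.range n).sup' (by simp [Finset.nonempty_range_iff]; omega) (fun i => t (i + 1) - t i)

open Set Metric Filter Topology

theorem closure_iUnion_subset_iInter {α ι κ : Type*} [TopologicalSpace α] {L : ι → Set α}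
    {U : κ → Set α} (hU : ∀ k, IsClosed (U k)) (hLU : ∀ i k, L i ⊆ U k) :
    closure (⋃ i, L i) ⊆ ⋂ k, U k :=
  closure_minimal (iUnion_subset fun i => subset_iInter (hLU i)) (isClosed_iInter hU)

theorem closure_iUnion_eq_of_eq_iInter {α ι κ : Type*} [TopologicalSpace α]
    {L U : ι → Set α} {L' U' : κ → Set α} (hU : ∀ i, IsClosed (U i))
    (hU' : ∀ k, IsClosed (U' k)) (hLU : closure (⋃ i, L i) = ⋂ i, U i)
    (hLU' : closure (⋃ k, L' k) = ⋂ k, U' k) (hL : ∀ i k, L i ⊆ U' k)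
    (hL' : ∀ k i, L' k ⊆ U i) :
    closure (⋃ i, L i) = closure (⋃ k, L' k) :=
  subset_antisymm (hLU' ▸ closure_iUnion_subset_iInter hU' hL)
    (hLU ▸ closure_iUnion_subset_iInter hU hL')

theorem tendsto_prod_atTop_zero_of_le_max {ι κ : Type*} [Preorder ι] [Preorder κ]
    {f : ι × κ → ℝ} {ε : ι → ℝ} {ε' : κ → ℝ} (hf : ∀ p, 0 ≤ f p)
    (hfε : ∀ p, f p ≤ max (ε p.1) (ε' p.2)) (hε : Tendsto ε atTop (𝓝 0))
    (hε' : Tendsto ε' atTop (𝓝 0)) : Tendsto f atTop (𝓝 0) := by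
  rw [← prod_atTop_atTop_eq]
  refine squeeze_zero hf hfε ?_
  simpa using (hε.comp tendsto_fst).max (hε'.comp tendsto_snd)

section HausdorffDist

variable {α : Type*} [PseudoMetricSpace α]

theorem closure_iUnion_eq_iInter_of_infDist_le {ι : Type*} {l : Filter ι} [l.NeBot]
    {L U : ι → Set α} {ε : ι → ℝ} (hε : Tendsto ε l (𝓝 0))
    (hU : ∀ i, IsClosed (U i)) (hLU : ∀ i j, L i ⊆ U j) (hL : ∀ i, (L i).Nonempty)
    (hUL : ∀ i, ∀ x ∈ U i, infDist x (L i) ≤ ε i) :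
    closure (⋃ i, L i) = ⋂ i, U i := by
  refine (closure_iUnion_subset_iInter hU hLU).antisymm fun x hx => ?_
  refine Metric.mem_closure_iff.2 fun r hr => ?_
  obtain ⟨i, hi⟩ := (hε.eventually (gt_mem_nhds hr)).exists
  obtain ⟨y, hy, hxy⟩ :=
    (infDist_lt_iff (hL i)).1 ((hUL i x (mem_iInter.1 hx i)).trans_lt hi)
  exact ⟨y, mem_iUnion.2 ⟨i, hy⟩, hxy⟩

variable {L U L' U' : Set α} {ε ε' : ℝ}

theorem hausdorffDist_lower_le_max (hε : 0 ≤ ε) (hLU' : L ⊆ U') (hL'U : L' ⊆ U)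
    (hUL : ∀ x ∈ U, infDist x L ≤ ε) (hUL' : ∀ x ∈ U', infDist x L' ≤ ε') :
    hausdorffDist L L' ≤ max ε ε' :=
  hausdorffDist_le_of_infDist (le_max_of_le_left hε)
    (fun x hx => (hUL' x (hLU' hx)).trans (le_max_right _ _))
    (fun x hx => (hUL x (hL'U hx)).trans (le_max_left _ _))

theorem hausdorffDist_upper_le_max (hε : 0 ≤ ε) (hL : L.Nonempty) (hL' : L'.Nonempty)
    (hLU' : L ⊆ U') (hL'U : L' ⊆ U)
    (hUL : ∀ x ∈ U, infDist x L ≤ ε) (hUL' : ∀ x ∈ U', infDist x L' ≤ ε') :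
    hausdorffDist U U' ≤ max ε ε' :=
  hausdorffDist_le_of_infDist (le_max_of_le_left hε)
    (fun x hx => ((infDist_le_infDist_of_subset hLU' hL).trans (hUL x hx)).trans
      (le_max_left _ _))
    (fun x hx => ((infDist_le_infDist_of_subset hL'U hL').trans (hUL' x hx)).trans
      (le_max_right _ _))

end HausdorffDist

theorem sub_pred_le_partitionMesh {n : ℕ} {t : ℕ → ℝ} (hn : 1 ≤ n) {i : ℕ}
    (hi : i ∈ Finset.Icc 1 n) : t i - t (i - 1) ≤ partitionMesh n t hn := by
  obtain ⟨hi1, hin⟩ := Finset.mem_Icc.1 hi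
  have hle := Finset.le_sup' (fun k => t (k + 1) - t k)
    (Finset.mem_range.2 (by omega : i - 1 < n))
  rwa [Nat.sub_add_cancel hi1] at hle

namespace IsPartition

variable {t₀ tEnd : ℝ} {n : ℕ} {t : ℕ → ℝ}

theorem monotoneOn (hP : IsPartition t₀ tEnd n t) : MonotoneOn t (Iic n) :=
  (strictMonoOn_Iic_of_lt_succ fun i hi => hP.2.2 i hi).monotoneOn

theorem mem_Icc (hP : IsPartition t₀ tEnd n t) {i : ℕ} (hi : i ≤ n) : t i ∈ Icc t₀ tEnd :=
  ⟨hP.1 ▸ hP.monotoneOn (Nat.zero_le n) hi (Nat.zero_le i),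
    hP.2.1 ▸ hP.monotoneOn hi (mem_Iic.2 le_rfl) hi⟩

theorem partitionMesh_pos (hP : IsPartition t₀ tEnd n t) (hn : 1 ≤ n) :
    0 < partitionMesh n t hn :=
  (sub_pos.2 (hP.2.2 0 hn)).trans_le
    (sub_pred_le_partitionMesh hn (Finset.mem_Icc.2 ⟨le_rfl, hn⟩))

end IsPartition

section Aumann

variable {E : Type*} [NormedAddCommGroup E] [NormedSpace ℝ E] {G : ℝ → Set E}

theorem zero_mem_aumannIntegral (hG0 : ∀ u, (0 : E) ∈ G u) (s : Set ℝ) :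
    (0 : E) ∈ aumannIntegral G s :=
  ⟨0, integrableOn_zero, ae_of_all _ hG0, integral_zero _ _ |>.symm⟩

theorem aumannIntegral_mono (hG0 : ∀ u, (0 : E) ∈ G u) {s s' : Set ℝ} (hs : MeasurableSet s)
    (hss' : s ⊆ s') : aumannIntegral G s ⊆ aumannIntegral G s' := by
  rintro _ ⟨f, hf, hfG, rfl⟩
  refine ⟨s.indicator f, (hf.integrable_indicator hs).integrableOn, ae_restrict_of_ae ?_, ?_⟩
  · filter_upwards [(ae_restrict_iff' hs).1 hfG] with τ hτ
    by_cases hτs : τ ∈ s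
    · simpa [indicator_of_mem hτs] using hτ hτs
    · simpa [indicator_of_notMem hτs] using hG0 τ
  · rw [setIntegral_indicator hs, inter_eq_right.2 hss']

theorem exists_dist_le_of_mem_aumannIntegral_Ioc {C : ℝ} (hGC : ∀ u, G u ⊆ closedBall 0 C)
    {s s' tEnd : ℝ} (hss' : s ≤ s') (hs' : s' ≤ tEnd) {y : E}
    (hy : y ∈ aumannIntegral G (Ioc s tEnd)) :
    ∃ y' ∈ aumannIntegral G (Ioc s' tEnd), dist y y' ≤ C * (s' - s) := by
  obtain ⟨f, hf, hfG, rfl⟩ := hy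
  have hsub : Ioc s' tEnd ⊆ Ioc s tEnd := Ioc_subset_Ioc_left hss'
  have hsub' : Ioc s s' ⊆ Ioc s tEnd := Ioc_subset_Ioc_right hs'
  refine ⟨∫ τ in Ioc s' tEnd, f τ,
    ⟨f, hf.mono_set hsub, ae_restrict_of_ae_restrict_of_subset hsub hfG, rfl⟩, ?_⟩
  have hsplit :
      ∫ τ in Ioc s tEnd, f τ = (∫ τ in Ioc s s', f τ) + ∫ τ in Ioc s' tEnd, f τ := by
    rw [← setIntegral_union (Ioc_disjoint_Ioc_of_le le_rfl) measurableSet_Ioc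
      (hf.mono_set hsub') (hf.mono_set hsub), Ioc_union_Ioc_eq_Ioc hss' hs']
  have hfC : ∀ᵐ τ ∂volume.restrict (Ioc s s'), ‖f τ‖ ≤ C := by
    filter_upwards [ae_restrict_of_ae_restrict_of_subset hsub' hfG] with τ hτ
    simpa using hGC τ hτ
  rw [hsplit, dist_add_self_left]
  calc ‖∫ τ in Ioc s s', f τ‖ ≤ C * volume.real (Ioc s s') :=
        norm_setIntegral_le_of_norm_le_const_ae measure_Ioc_lt_top hfC
    _ = C * (s' - s) := by rw [Real.volume_real_Ioc_of_le hss']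

end Aumann

section Sums

variable {E : Type*} [NormedAddCommGroup E] [NormedSpace ℝ E] {B G : ℝ → Set E}
  {t₀ tEnd : ℝ} {n m : ℕ} {t t' : ℕ → ℝ}

theorem isClosed_upperSum : IsClosed (upperSum B G tEnd n t) :=
  isClosed_closure.union (isClosed_biUnion_finset fun _ _ => isClosed_closure)

theorem lowerSum_nonempty (hB : (B (t 0)).Nonempty) (hG0 : ∀ u, (0 : E) ∈ G u) :
    (lowerSum B G tEnd n t).Nonempty :=
  let ⟨b, hb⟩ := hB
  ⟨b + 0, mem_union_left _ (subset_closure (add_mem_add hb (zero_mem_aumannIntegral hG0 _)))⟩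

theorem add_aumannIntegral_subset_upperSum (hG0 : ∀ u, (0 : E) ∈ G u) (hB : Monotone B)
    (hP : IsPartition t₀ tEnd n t) {s : ℝ} (hs : s ∈ Icc t₀ tEnd) :
    B s + aumannIntegral G (Ioc s tEnd) ⊆ upperSum B G tEnd n t := by
  classical
  rintro _ ⟨d, hd, y, hy, rfl⟩
  have hdn : d ∈ B (t n) := hP.2.1 ▸ hB hs.2 hd
  have hborn : ∃ p, d ∈ B (t p) := ⟨n, hdn⟩
  have hpn : Nat.find hborn ≤ n := Nat.find_min' hborn hdn
  have hdp : d ∈ B (t (Nat.find hborn)) := Nat.find_spec hborn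
  have hfirst : ∀ q < Nat.find hborn, d ∉ B (t q) := fun q => Nat.find_min hborn
  rcases hp : Nat.find hborn with _ | p
  · rw [hp] at hdp
    refine mem_union_left _ (subset_closure (add_mem_add hdp ?_))
    exact aumannIntegral_mono hG0 measurableSet_Ioc (Ioc_subset_Ioc_left (hP.1 ▸ hs.1)) hy
  · rw [hp] at hdp hpn hfirst
    have hdp' : d ∉ B (t p) := hfirst p p.lt_succ_self
    have hps : t p < s := lt_of_not_ge fun h => hdp' (hB h hd)
    refine mem_union_right _
      (mem_iUnion₂.2 ⟨p + 1, Finset.mem_Icc.2 ⟨p.succ_pos, hpn⟩, ?_⟩)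
    refine subset_closure (add_mem_add ⟨hdp, fun h => hdp' (interior_subset h)⟩ ?_)
    exact aumannIntegral_mono hG0 measurableSet_Ioc (Ioc_subset_Ioc_left hps.le) hy

theorem lowerSum_subset_upperSum (hG0 : ∀ u, (0 : E) ∈ G u) (hB : Monotone B)
    (hP : IsPartition t₀ tEnd n t) (hQ : IsPartition t₀ tEnd m t') :
    lowerSum B G tEnd n t ⊆ upperSum B G tEnd m t' := by
  refine union_subset ?_ (iUnion₂_subset fun i hi => closure_minimal ?_ isClosed_upperSum)
  · exact closure_minimal
      (add_aumannIntegral_subset_upperSum hG0 hB hQ (hP.mem_Icc (Nat.zero_le n))) isClosed_upperSum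
  · exact (add_subset_add sdiff_subset Subset.rfl).trans
      (add_aumannIntegral_subset_upperSum hG0 hB hQ (hP.mem_Icc (Finset.mem_Icc.1 hi).2))

theorem infDist_lowerSum_le_of_mem_upperSum {C : ℝ} (hC : 0 ≤ C)
    (hGC : ∀ u, G u ⊆ closedBall 0 C) (hP : IsPartition t₀ tEnd n t) (hn : 1 ≤ n) {x : E}
    (hx : x ∈ upperSum B G tEnd n t) :
    infDist x (lowerSum B G tEnd n t) ≤ C * partitionMesh n t hn := by
  rcases hx with hx | hx
  · have hxL : x ∈ lowerSum B G tEnd n t := mem_union_left _ hx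
    rw [infDist_zero_of_mem hxL]
    exact mul_nonneg hC (hP.partitionMesh_pos hn).le
  obtain ⟨i, hi, hx⟩ := mem_iUnion₂.1 hx
  obtain ⟨hi1, hin⟩ := Finset.mem_Icc.1 hi
  refine closure_minimal ?_ (isClosed_le (continuous_infDist_pt _) continuous_const) hx
  rintro _ ⟨d, hd, y, hy, rfl⟩
  obtain ⟨y', hy', hyy'⟩ := exists_dist_le_of_mem_aumannIntegral_Ioc hGC
    (hP.monotoneOn (by omega : i - 1 ≤ n) hin (Nat.sub_le i 1)) (hP.mem_Icc hin).2 hy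
  have hmem : d + y' ∈ lowerSum B G tEnd n t :=
    mem_union_right _ (mem_iUnion₂.2 ⟨i, hi, subset_closure (add_mem_add hd hy')⟩)
  calc infDist (d + y) (lowerSum B G tEnd n t) ≤ dist (d + y) (d + y') :=
        infDist_le_dist_of_mem hmem
    _ = dist y y' := dist_add_left _ _ _
    _ ≤ C * (t i - t (i - 1)) := hyy'
    _ ≤ C * partitionMesh n t hn :=
        mul_le_mul_of_nonneg_left (sub_pred_le_partitionMesh hn hi) hC

end Sums

theorem lowerSum_upperSum_limit_independent_of_refinement_general
    {Ω : Type*} [mΩ : MeasurableSpace Ω]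
    {E : Type*} [NormedAddCommGroup E] [NormedSpace ℝ E]
    (t₀ : ℝ) (P : Measure Ω)
    (B G : Ω → ℝ → Set E) (K : Set E) (hK : Bornology.IsBounded K)
    (hBvals : ∀ ω u, (B ω u).Nonempty ∧ IsClosed (B ω u))
    (hBmono : ∀ ω, ∀ s u : ℝ, s ≤ u → B ω s ⊆ B ω u)
    (hG0 : ∀ ω u, (0 : E) ∈ G ω u) (hGsub : ∀ ω u, G ω u ⊆ K)
    (tEnd : ℝ) (N N' : ℕ → ℕ) (hN : ∀ j, 1 ≤ N j) (hN' : ∀ l, 1 ≤ N' l)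
    (t t' : ℕ → ℕ → ℝ)
    (hpart : ∀ j, IsPartition t₀ tEnd (N j) (t j))
    (hpart' : ∀ l, IsPartition t₀ tEnd (N' l) (t' l))
    (hmesh : Filter.Tendsto (fun j => partitionMesh (N j) (t j) (hN j))
      Filter.atTop (nhds 0))
    (hmesh' : Filter.Tendsto (fun l => partitionMesh (N' l) (t' l) (hN' l))
      Filter.atTop (nhds 0)) :
    ∀ᵐ ω ∂P,
      Filter.Tendsto (fun jl : ℕ × ℕ =>
          Metric.hausdorffDist (lowerSum (B ω) (G ω) tEnd (N jl.1) (t jl.1))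
            (lowerSum (B ω) (G ω) tEnd (N' jl.2) (t' jl.2))) Filter.atTop (nhds 0) ∧
      Filter.Tendsto (fun jl : ℕ × ℕ =>
          Metric.hausdorffDist (upperSum (B ω) (G ω) tEnd (N jl.1) (t jl.1))
            (upperSum (B ω) (G ω) tEnd (N' jl.2) (t' jl.2))) Filter.atTop (nhds 0) ∧
      closure (⋃ j, lowerSum (B ω) (G ω) tEnd (N j) (t j)) =
        ⋂ j, upperSum (B ω) (G ω) tEnd (N j) (t j) ∧
      closure (⋃ j, lowerSum (B ω) (G ω) tEnd (N j) (t j)) =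
        closure (⋃ l, lowerSum (B ω) (G ω) tEnd (N' l) (t' l)) := by
  obtain ⟨C, hKC⟩ := hK.subset_closedBall 0
  refine ae_of_all P fun ω => ?_
  have hGC : ∀ u, G ω u ⊆ closedBall 0 C := fun u => (hGsub ω u).trans hKC
  have hC : 0 ≤ C := nonempty_closedBall.1 ⟨0, hGC t₀ (hG0 ω t₀)⟩
  have hcross {n m : ℕ} {u v : ℕ → ℝ} (hu : IsPartition t₀ tEnd n u)
      (hv : IsPartition t₀ tEnd m v) :
      lowerSum (B ω) (G ω) tEnd n u ⊆ upperSum (B ω) (G ω) tEnd m v :=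
    lowerSum_subset_upperSum (hG0 ω) (fun _ _ h => hBmono ω _ _ h) hu hv
  have happrox j x :=
    infDist_lowerSum_le_of_mem_upperSum (B := B ω) (x := x) hC hGC (hpart j) (hN j)
  have happrox' l x :=
    infDist_lowerSum_le_of_mem_upperSum (B := B ω) (x := x) hC hGC (hpart' l) (hN' l)
  have hε := by simpa using hmesh.const_mul C
  have hε' := by simpa using hmesh'.const_mul C
  have hε0 j := mul_nonneg hC (hpart j |>.partitionMesh_pos (hN j)).le
  have hne j := lowerSum_nonempty (tEnd := tEnd) (n := N j) (hBvals ω (t j 0)).1 (hG0 ω)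
  have hne' l := lowerSum_nonempty (tEnd := tEnd) (n := N' l) (hBvals ω (t' l 0)).1 (hG0 ω)
  have hlim := closure_iUnion_eq_iInter_of_infDist_le hε (fun _ => isClosed_upperSum)
    (fun j k => hcross (hpart j) (hpart k)) hne happrox
  have hlim' := closure_iUnion_eq_iInter_of_infDist_le hε' (fun _ => isClosed_upperSum)
    (fun l k => hcross (hpart' l) (hpart' k)) hne' happrox'
  refine ⟨tendsto_prod_atTop_zero_of_le_max (fun _ => hausdorffDist_nonneg)
      (fun p => hausdorffDist_lower_le_max (hε0 p.1) (hcross (hpart p.1) (hpart' p.2))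
        (hcross (hpart' p.2) (hpart p.1)) (happrox p.1) (happrox' p.2)) hε hε',
    tendsto_prod_atTop_zero_of_le_max (fun _ => hausdorffDist_nonneg)
      (fun p => hausdorffDist_upper_le_max (hε0 p.1) (hne p.1) (hne' p.2)
        (hcross (hpart p.1) (hpart' p.2)) (hcross (hpart' p.2) (hpart p.1))
        (happrox p.1) (happrox' p.2)) hε hε',
    hlim, closure_iUnion_eq_of_eq_iInter (fun _ => isClosed_upperSum)
      (fun _ => isClosed_upperSum) hlim hlim' (fun j l => hcross (hpart j) (hpart' l))
      (fun l j => hcross (hpart' l) (hpart j))⟩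

/-- Independence of the limit from the refinement sequence: for any two refinement sequences
of partitions of `[t₀,t]` the lower (resp. upper) sums become arbitrarily Hausdorff-close to
each other; in particular the closure of the union of the lower sums equals the intersection
of the upper sums, independently of the chosen refinement sequence. -/
theorem lowerSum_upperSum_limit_independent_of_refinement
    {Ω : Type*} [mΩ : MeasurableSpace Ω]
    {E : Type*} [NormedAddCommGroup E] [NormedSpace ℝ E] [CompleteSpace E]
    [TopologicalSpace.SeparableSpace (StrongDual ℝ E)]
    (hrefl : Function.Surjective (NormedSpace.inclusionInDoubleDual ℝ E))
    (t₀ T : ℝ) (hT : t₀ ≤ T)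
    (P : Measure Ω) [IsProbabilityMeasure P]
    (𝓕 : ℝ → MeasurableSpace Ω) (h𝓕mono : Monotone 𝓕) (h𝓕le : ∀ u, 𝓕 u ≤ mΩ)
    (B G : Ω → ℝ → Set E) (K : Set E) (hK : Bornology.IsBounded K)
    (hBvals : ∀ ω u, (B ω u).Nonempty ∧ IsClosed (B ω u))
    (hBmono : ∀ ω, ∀ s u : ℝ, s ≤ u → B ω s ⊆ B ω u)
    (hBadapted : ∀ u : ℝ, ∀ O : Set E, IsOpen O →
      MeasurableSet[𝓕 u] {ω | (B ω u ∩ O).Nonempty})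
    (hGvals : ∀ ω u, (G ω u).Nonempty ∧ IsClosed (G ω u) ∧ Convex ℝ (G ω u))
    (hG0 : ∀ ω u, (0 : E) ∈ G ω u) (hGsub : ∀ ω u, G ω u ⊆ K)
    (hGpred : ∀ O : Set E, IsOpen O →
      MeasurableSet[predictableSigma 𝓕 t₀ T] {p : Ω × ℝ | (G p.1 p.2 ∩ O).Nonempty})
    (tEnd : ℝ) (htEnd : tEnd ∈ Set.Icc t₀ T)
    (N N' : ℕ → ℕ) (hN : ∀ j, 1 ≤ N j) (hN' : ∀ l, 1 ≤ N' l)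
    (t t' : ℕ → ℕ → ℝ)
    (hpart : ∀ j, IsPartition t₀ tEnd (N j) (t j))
    (hpart' : ∀ l, IsPartition t₀ tEnd (N' l) (t' l))
    (hrefseq : ∀ j, ∀ i ≤ N j, ∃ i' ≤ N (j + 1), t (j + 1) i' = t j i)
    (hrefseq' : ∀ l, ∀ i ≤ N' l, ∃ i' ≤ N' (l + 1), t' (l + 1) i' = t' l i)
    (hmesh : Filter.Tendsto (fun j => partitionMesh (N j) (t j) (hN j))
      Filter.atTop (nhds 0))
    (hmesh' : Filter.Tendsto (fun l => partitionMesh (N' l) (t' l) (hN' l))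
      Filter.atTop (nhds 0)) :
    ∀ᵐ ω ∂P,
      Filter.Tendsto (fun jl : ℕ × ℕ =>
          Metric.hausdorffDist (lowerSum (B ω) (G ω) tEnd (N jl.1) (t jl.1))
            (lowerSum (B ω) (G ω) tEnd (N' jl.2) (t' jl.2))) Filter.atTop (nhds 0) ∧
      Filter.Tendsto (fun jl : ℕ × ℕ =>
          Metric.hausdorffDist (upperSum (B ω) (G ω) tEnd (N jl.1) (t jl.1))
            (upperSum (B ω) (G ω) tEnd (N' jl.2) (t' jl.2))) Filter.atTop (nhds 0) ∧
      closure (⋃ j, lowerSum (B ω) (G ω) tEnd (N j) (t j)) =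
        ⋂ j, upperSum (B ω) (G ω) tEnd (N j) (t j) ∧
      closure (⋃ j, lowerSum (B ω) (G ω) tEnd (N j) (t j)) =
        closure (⋃ l, lowerSum (B ω) (G ω) tEnd (N' l) (t' l)) :=
  lowerSum_upperSum_limit_independent_of_refinement_general (mΩ := mΩ) t₀ P B G K hK hBvals hBmono
    hG0 hGsub tEnd N N' hN hN' t t' hpart hpart' hmesh hmesh'
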